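/- arXiv:2404.19623 — 2 statements merged into one kernel-verified Lean document; each statement's English description precedes it below -/
import Mathlib

section
/- (Theorem 1, part 1) For each player i and each k ∈ ℕ₀, Ψᵏ_{θ_{ik}} ⊆ Σᵏ_{θ_{ik}}; consequently, Ψ^∞_{θ_i} ⊆ Σ^∞_{θ_i} for every type θ_i, and the CH solution is contained in the set of Δ^κ-rationalizable type-action pairs. -/
open scoped BigOperators
open Classical

noncomputable section

/-- A belief of a player: a probability distribution over
(opponent level-type, opponent action) pairs. -/
structure Belief (B : Type*) where
  p : ℕ × B → ℝ
  nonneg : ∀ x, 0 ≤ p x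
  hasSum_one : HasSum p 1

/-- Marginal probability assigned to the opponent's level-`t` type. -/
def Belief.marg {B : Type*} [Fintype B] (μ : Belief B) (t : ℕ) : ℝ := ∑ b : B, μ.p (t, b)

/-- Probability assigned by a belief to a set of (level, action) pairs. -/
def Belief.probOn {B : Type*} (μ : Belief B) (S : Set (ℕ × B)) : ℝ := ∑' x, S.indicator μ.p x

/-- `f` normalized to the levels `0, …, k-1` (denoted `f^k` in the paper). -/
def fnorm (f : ℕ → ℝ) (k t : ℕ) : ℝ := f t / ∑ ℓ ∈ Finset.range k, f ℓ

/-- Membership in `Δ^{θ_{ik}}`: conditions K1–K3 for `k ≥ 1`; no restriction for `k = 0`. -/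
def memDelta {B : Type*} [Fintype B] (f : ℕ → ℝ) (k : ℕ) (μ : Belief B) : Prop :=
  k ≠ 0 →
    ((∀ t, k ≤ t → μ.marg t = 0) ∧
     (0 < μ.marg 0 → ∀ b : B, μ.p (0, b) / μ.marg 0 = 1 / (Fintype.card B : ℝ)) ∧
     (∀ t, t < k → μ.marg t = fnorm f k t))

/-- Expected payoff of own action `a` for the own level-`k` type given belief `μ`:
the level-0 type's payoff is constant `0`, all other types get `v`. -/
def expPay {A B : Type*} (v : A → B → ℝ) (k : ℕ) (μ : Belief B) (a : A) : ℝ :=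
  ∑' x : ℕ × B, μ.p x * (if k = 0 then 0 else v a x.2)

/-- `a` is a best response to belief `μ` under the own level-`k` type. -/
def isBR {A B : Type*} (v : A → B → ℝ) (k : ℕ) (μ : Belief B) (a : A) : Prop :=
  ∀ a' : A, expPay v k μ a' ≤ expPay v k μ a

/-- The Δ^κ-rationalization procedure; component 1 is player 1's set of surviving
(level, action) pairs, component 2 is player 2's. -/
def SigmaProc {A B : Type*} [Fintype A] [Fintype B]
    (v1 : A → B → ℝ) (v2 : B → A → ℝ) (f : ℕ → ℝ) :
    ℕ → Set (ℕ × A) × Set (ℕ × B)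
  | 0 => (Set.univ, Set.univ)
  | n + 1 =>
      let P := SigmaProc v1 v2 f n
      ({x | x ∈ P.1 ∧ ∃ μ : Belief B, memDelta f x.1 μ ∧ μ.probOn P.2 = 1 ∧ isBR v1 x.1 μ x.2},
       {y | y ∈ P.2 ∧ ∃ μ : Belief A, memDelta f y.1 μ ∧ μ.probOn P.1 = 1 ∧ isBR v2 y.1 μ y.2})

/-- The section `Σⁿ_{θ_{1k}}` of player 1 (as a set of actions). -/
def SigmaSec1 {A B : Type*} [Fintype A] [Fintype B]
    (v1 : A → B → ℝ) (v2 : B → A → ℝ) (f : ℕ → ℝ) (n k : ℕ) : Set A :=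
  {a | (k, a) ∈ (SigmaProc v1 v2 f n).1}

/-- The section `Σⁿ_{θ_{2k}}` of player 2 (as a set of actions). -/
def SigmaSec2 {A B : Type*} [Fintype A] [Fintype B]
    (v1 : A → B → ℝ) (v2 : B → A → ℝ) (f : ℕ → ℝ) (n k : ℕ) : Set B :=
  {b | (k, b) ∈ (SigmaProc v1 v2 f n).2}

/-- The CH-procedure requirement on beliefs at step `n+1`, given the previous
sections `Ψⁿ` of the opponent: the support of `μ` equals `∪_{t=0}^{n} Ψⁿ_{θ_{-i,t}}`
and `μ` is conditionally uniform over each `Ψⁿ_{θ_{-i,t}}`. -/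
def CHBelief {B : Type*} (Ψ : ℕ → Set B) (n : ℕ) (μ : Belief B) : Prop :=
  (∀ x : ℕ × B, μ.p x ≠ 0 ↔ x.1 ≤ n ∧ x.2 ∈ Ψ x.1) ∧
  (∀ t, t ≤ n → ∀ b b' : B, b ∈ Ψ t → b' ∈ Ψ t → μ.p (t, b) = μ.p (t, b'))

/-- The CH-procedure: step `n` returns, for each player and each level `k`,
the set of actions in `Ψⁿ_{θ_{ik}}`. -/
def CHProc {A B : Type*} [Fintype A] [Fintype B]
    (v1 : A → B → ℝ) (v2 : B → A → ℝ) (f : ℕ → ℝ) :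
    ℕ → (ℕ → Set A) × (ℕ → Set B)
  | 0 => (fun _ => Set.univ, fun _ => Set.univ)
  | n + 1 =>
      let P := CHProc v1 v2 f n
      (fun k =>
        if k = n + 1 then
          {a | ∃ μ : Belief B, memDelta f (n + 1) μ ∧ CHBelief P.2 n μ ∧ isBR v1 (n + 1) μ a}
        else P.1 k,
       fun k =>
        if k = n + 1 then
          {b | ∃ μ : Belief A, memDelta f (n + 1) μ ∧ CHBelief P.1 n μ ∧ isBR v2 (n + 1) μ b}
        else P.2 k)

/-- `Ψⁿ_{θ_{1k}}` for player 1 (as a set of actions). -/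
def CHSec1 {A B : Type*} [Fintype A] [Fintype B]
    (v1 : A → B → ℝ) (v2 : B → A → ℝ) (f : ℕ → ℝ) (n k : ℕ) : Set A :=
  (CHProc v1 v2 f n).1 k

/-- `Ψⁿ_{θ_{2k}}` for player 2 (as a set of actions). -/
def CHSec2 {A B : Type*} [Fintype A] [Fintype B]
    (v1 : A → B → ℝ) (v2 : B → A → ℝ) (f : ℕ → ℝ) (n k : ℕ) : Set B :=
  (CHProc v1 v2 f n).2 k

end

noncomputable section AuxProofs

lemma belief_summable {B : Type*} (μ : Belief B) : Summable μ.p := μ.hasSum_one.summable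

lemma probOn_eq_one_of {B : Type*} (μ : Belief B) {S : Set (ℕ × B)}
    (h : ∀ x, μ.p x ≠ 0 → x ∈ S) : μ.probOn S = 1 := by
  have he : S.indicator μ.p = μ.p := by
    funext x
    by_cases hx : x ∈ S
    · exact Set.indicator_of_mem hx _
    · rw [Set.indicator_of_notMem hx]
      by_contra h'
      exact hx (h x fun hz => h' hz.symm)
  rw [Belief.probOn, he, μ.hasSum_one.tsum_eq]

lemma eq_zero_of_probOn_eq_one {B : Type*} (μ : Belief B) {S : Set (ℕ × B)}
    (h : μ.probOn S = 1) {x : ℕ × B} (hx : x ∉ S) : μ.p x = 0 := by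
  have hs : Summable (S.indicator μ.p) := (belief_summable μ).indicator S
  have hle : ∀ y, S.indicator μ.p y ≤ μ.p y :=
    fun y => Set.indicator_le_self' (fun a _ => μ.nonneg a) y
  have hg : Summable (fun y => μ.p y - S.indicator μ.p y) := (belief_summable μ).sub hs
  have htg : ∑' y, (μ.p y - S.indicator μ.p y) = 0 := by
    rw [Summable.tsum_sub (belief_summable μ) hs, μ.hasSum_one.tsum_eq]
    have : ∑' y, S.indicator μ.p y = 1 := h
    rw [this]; ring
  have hxle := Summable.le_tsum hg x (fun y _ => sub_nonneg.mpr (hle y))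
  rw [htg, Set.indicator_of_notMem hx] at hxle
  have h0 := μ.nonneg x
  linarith

lemma p_eq_zero_of_marg {B : Type*} [Fintype B] (μ : Belief B) {t : ℕ}
    (h : μ.marg t = 0) (b : B) : μ.p (t, b) = 0 := by
  rw [Belief.marg] at h
  exact (Finset.sum_eq_zero_iff_of_nonneg (fun b _ => μ.nonneg (t, b))).mp h b (Finset.mem_univ b)

/-- Dirac belief concentrated at a single point. -/
def diracBelief {B : Type*} (x₀ : ℕ × B) : Belief B where
  p x := if x = x₀ then 1 else 0
  nonneg x := by by_cases h : x = x₀ <;> simp [h]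
  hasSum_one := hasSum_ite_eq x₀ 1

lemma expPay_zero {A B : Type*} (v : A → B → ℝ) (μ : Belief B) (a : A) :
    expPay v 0 μ a = 0 := by
  simp [expPay]

lemma isBR_zero {A B : Type*} (v : A → B → ℝ) (μ : Belief B) (a : A) :
    isBR v 0 μ a := by
  intro a'
  rw [expPay_zero, expPay_zero]

variable {A B : Type*} [Fintype A] [Fintype B]

lemma mem_sigma1_succ (v1 : A → B → ℝ) (v2 : B → A → ℝ) (f : ℕ → ℝ) (n k : ℕ) (a : A) :
    (k, a) ∈ (SigmaProc v1 v2 f (n + 1)).1 ↔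
      (k, a) ∈ (SigmaProc v1 v2 f n).1 ∧
        ∃ μ : Belief B, memDelta f k μ ∧ μ.probOn (SigmaProc v1 v2 f n).2 = 1 ∧
          isBR v1 k μ a := Iff.rfl

lemma mem_sigma2_succ (v1 : A → B → ℝ) (v2 : B → A → ℝ) (f : ℕ → ℝ) (n k : ℕ) (b : B) :
    (k, b) ∈ (SigmaProc v1 v2 f (n + 1)).2 ↔
      (k, b) ∈ (SigmaProc v1 v2 f n).2 ∧
        ∃ μ : Belief A, memDelta f k μ ∧ μ.probOn (SigmaProc v1 v2 f n).1 = 1 ∧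
          isBR v2 k μ b := Iff.rfl

lemma sigma_le (v1 : A → B → ℝ) (v2 : B → A → ℝ) (f : ℕ → ℝ) {m n : ℕ} (h : m ≤ n) :
    (SigmaProc v1 v2 f n).1 ⊆ (SigmaProc v1 v2 f m).1 ∧
      (SigmaProc v1 v2 f n).2 ⊆ (SigmaProc v1 v2 f m).2 := by
  induction n with
  | zero =>
    have : m = 0 := Nat.le_zero.mp h
    subst this; exact ⟨subset_rfl, subset_rfl⟩
  | succ n ih =>
    rcases Nat.lt_or_ge m (n + 1) with h' | h'
    · have hmn := ih (Nat.lt_succ_iff.mp h')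
      constructor
      · intro x hx
        exact hmn.1 ((mem_sigma1_succ v1 v2 f n x.1 x.2).mp hx).1
      · intro y hy
        exact hmn.2 ((mem_sigma2_succ v1 v2 f n y.1 y.2).mp hy).1
    · have : m = n + 1 := le_antisymm h h'
      subst this; exact ⟨subset_rfl, subset_rfl⟩

variable [Nonempty A] [Nonempty B]

lemma level0 (v1 : A → B → ℝ) (v2 : B → A → ℝ) (f : ℕ → ℝ) :
    ∀ n, (∀ a : A, ((0 : ℕ), a) ∈ (SigmaProc v1 v2 f n).1) ∧
      (∀ b : B, ((0 : ℕ), b) ∈ (SigmaProc v1 v2 f n).2) := by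
  intro n
  induction n with
  | zero => exact ⟨fun a => Set.mem_univ _, fun b => Set.mem_univ _⟩
  | succ n ih =>
    constructor
    · intro a
      refine (mem_sigma1_succ v1 v2 f n 0 a).mpr
        ⟨ih.1 a, diracBelief (0, Classical.arbitrary B), fun h => absurd rfl h, ?_, isBR_zero _ _ _⟩
      apply probOn_eq_one_of
      intro x hx
      have hx' : x = (0, Classical.arbitrary B) := by
        by_contra h'
        exact hx (by simp [diracBelief, h'])
      subst hx'
      exact ih.2 _
    · intro b
      refine (mem_sigma2_succ v1 v2 f n 0 b).mpr
        ⟨ih.2 b, diracBelief (0, Classical.arbitrary A), fun h => absurd rfl h, ?_, isBR_zero _ _ _⟩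
      apply probOn_eq_one_of
      intro x hx
      have hx' : x = (0, Classical.arbitrary A) := by
        by_contra h'
        exact hx (by simp [diracBelief, h'])
      subst hx'
      exact ih.1 _

lemma sigma_stable (v1 : A → B → ℝ) (v2 : B → A → ℝ) (f : ℕ → ℝ) :
    ∀ k : ℕ,
      (∀ a : A, (k, a) ∈ (SigmaProc v1 v2 f k).1 → ∀ n, (k, a) ∈ (SigmaProc v1 v2 f n).1) ∧
      (∀ b : B, (k, b) ∈ (SigmaProc v1 v2 f k).2 → ∀ n, (k, b) ∈ (SigmaProc v1 v2 f n).2) := by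
  intro k
  induction k using Nat.strong_induction_on with
  | _ k IH =>
  rcases k with _ | t
  · exact ⟨fun a _ n => (level0 v1 v2 f n).1 a, fun b _ n => (level0 v1 v2 f n).2 b⟩
  constructor
  · intro a ha
    obtain ⟨-, μ, hΔ, hprob, hBR⟩ := (mem_sigma1_succ v1 v2 f t (t + 1) a).mp ha
    have hK := hΔ (Nat.succ_ne_zero t)
    have hsupp : ∀ n, ∀ x : ℕ × B, μ.p x ≠ 0 → x ∈ (SigmaProc v1 v2 f n).2 := by
      intro n x hx
      have hlt : x.1 < t + 1 := by
        by_contra h'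
        exact hx (p_eq_zero_of_marg μ (hK.1 x.1 (Nat.le_of_not_lt h')) x.2)
      have hmem : x ∈ (SigmaProc v1 v2 f t).2 := by
        by_contra h'
        exact hx (eq_zero_of_probOn_eq_one μ hprob h')
      have hx1 : x ∈ (SigmaProc v1 v2 f x.1).2 :=
        (sigma_le v1 v2 f (Nat.lt_succ_iff.mp hlt)).2 hmem
      exact (IH x.1 hlt).2 x.2 hx1 n
    intro n
    induction n with
    | zero => exact Set.mem_univ _
    | succ n ihn =>
      exact (mem_sigma1_succ v1 v2 f n (t + 1) a).mpr
        ⟨ihn, μ, hΔ, probOn_eq_one_of μ (hsupp n), hBR⟩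
  · intro b hb
    obtain ⟨-, μ, hΔ, hprob, hBR⟩ := (mem_sigma2_succ v1 v2 f t (t + 1) b).mp hb
    have hK := hΔ (Nat.succ_ne_zero t)
    have hsupp : ∀ n, ∀ x : ℕ × A, μ.p x ≠ 0 → x ∈ (SigmaProc v1 v2 f n).1 := by
      intro n x hx
      have hlt : x.1 < t + 1 := by
        by_contra h'
        exact hx (p_eq_zero_of_marg μ (hK.1 x.1 (Nat.le_of_not_lt h')) x.2)
      have hmem : x ∈ (SigmaProc v1 v2 f t).1 := by
        by_contra h'
        exact hx (eq_zero_of_probOn_eq_one μ hprob h')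
      have hx1 : x ∈ (SigmaProc v1 v2 f x.1).1 :=
        (sigma_le v1 v2 f (Nat.lt_succ_iff.mp hlt)).1 hmem
      exact (IH x.1 hlt).1 x.2 hx1 n
    intro n
    induction n with
    | zero => exact Set.mem_univ _
    | succ n ihn =>
      exact (mem_sigma2_succ v1 v2 f n (t + 1) b).mpr
        ⟨ihn, μ, hΔ, probOn_eq_one_of μ (hsupp n), hBR⟩

lemma mem_ch1_succ (v1 : A → B → ℝ) (v2 : B → A → ℝ) (f : ℕ → ℝ) (n : ℕ) (a : A) :
    a ∈ (CHProc v1 v2 f (n + 1)).1 (n + 1) ↔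
      ∃ μ : Belief B, memDelta f (n + 1) μ ∧ CHBelief (CHProc v1 v2 f n).2 n μ ∧
        isBR v1 (n + 1) μ a := by
  simp [CHProc]

lemma mem_ch2_succ (v1 : A → B → ℝ) (v2 : B → A → ℝ) (f : ℕ → ℝ) (n : ℕ) (b : B) :
    b ∈ (CHProc v1 v2 f (n + 1)).2 (n + 1) ↔
      ∃ μ : Belief A, memDelta f (n + 1) μ ∧ CHBelief (CHProc v1 v2 f n).1 n μ ∧
        isBR v2 (n + 1) μ b := by
  simp [CHProc]

lemma ch_stable (v1 : A → B → ℝ) (v2 : B → A → ℝ) (f : ℕ → ℝ) :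
    ∀ n k, k ≤ n →
      (CHProc v1 v2 f n).1 k = (CHProc v1 v2 f k).1 k ∧
      (CHProc v1 v2 f n).2 k = (CHProc v1 v2 f k).2 k := by
  intro n
  induction n with
  | zero =>
    intro k hk
    have : k = 0 := Nat.le_zero.mp hk
    subst this; exact ⟨rfl, rfl⟩
  | succ n ih =>
    intro k hk
    rcases eq_or_lt_of_le hk with h | h
    · subst h; exact ⟨rfl, rfl⟩
    · have hk' : k ≤ n := Nat.lt_succ_iff.mp h
      have hne : k ≠ n + 1 := Nat.ne_of_lt h
      constructor
      · rw [show (CHProc v1 v2 f (n + 1)).1 k = (CHProc v1 v2 f n).1 k by simp [CHProc, hne]]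
        exact (ih k hk').1
      · rw [show (CHProc v1 v2 f (n + 1)).2 k = (CHProc v1 v2 f n).2 k by simp [CHProc, hne]]
        exact (ih k hk').2

lemma ch_main (v1 : A → B → ℝ) (v2 : B → A → ℝ) (f : ℕ → ℝ) :
    ∀ k : ℕ,
      (∀ a : A, a ∈ (CHProc v1 v2 f k).1 k → ∀ n, (k, a) ∈ (SigmaProc v1 v2 f n).1) ∧
      (∀ b : B, b ∈ (CHProc v1 v2 f k).2 k → ∀ n, (k, b) ∈ (SigmaProc v1 v2 f n).2) := by
  intro k
  induction k using Nat.strong_induction_on with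
  | _ k IH =>
  rcases k with _ | t
  · exact ⟨fun a _ n => (level0 v1 v2 f n).1 a, fun b _ n => (level0 v1 v2 f n).2 b⟩
  constructor
  · intro a ha
    obtain ⟨μ, hΔ, hCH, hBR⟩ := (mem_ch1_succ v1 v2 f t a).mp ha
    have hsupp : ∀ n, ∀ x : ℕ × B, μ.p x ≠ 0 → x ∈ (SigmaProc v1 v2 f n).2 := by
      intro n x hx
      obtain ⟨hle, hmem⟩ := (hCH.1 x).mp hx
      rw [(ch_stable v1 v2 f t x.1 hle).2] at hmem
      exact (IH x.1 (Nat.lt_succ_of_le hle)).2 x.2 hmem n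
    intro n
    induction n with
    | zero => exact Set.mem_univ _
    | succ n ihn =>
      exact (mem_sigma1_succ v1 v2 f n (t + 1) a).mpr
        ⟨ihn, μ, hΔ, probOn_eq_one_of μ (hsupp n), hBR⟩
  · intro b hb
    obtain ⟨μ, hΔ, hCH, hBR⟩ := (mem_ch2_succ v1 v2 f t b).mp hb
    have hsupp : ∀ n, ∀ x : ℕ × A, μ.p x ≠ 0 → x ∈ (SigmaProc v1 v2 f n).1 := by
      intro n x hx
      obtain ⟨hle, hmem⟩ := (hCH.1 x).mp hx
      rw [(ch_stable v1 v2 f t x.1 hle).1] at hmem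
      exact (IH x.1 (Nat.lt_succ_of_le hle)).1 x.2 hmem n
    intro n
    induction n with
    | zero => exact Set.mem_univ _
    | succ n ihn =>
      exact (mem_sigma2_succ v1 v2 f n (t + 1) b).mpr
        ⟨ihn, μ, hΔ, probOn_eq_one_of μ (hsupp n), hBR⟩

end AuxProofs

/-- Theorem 1, part 1: `Ψᵏ_{θ_{ik}} ⊆ Σᵏ_{θ_{ik}}` for each player i and
level k; consequently `Ψ^∞_{θ_i} ⊆ Σ^∞_{θ_i}` for every type. -/
theorem ch_subset_sigma {A B : Type*} [Fintype A] [Fintype B] [Nonempty A] [Nonempty B]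
    (v1 : A → B → ℝ) (v2 : B → A → ℝ)
    (f : ℕ → ℝ) (hf : ∀ n, 0 < f n) (hfsum : HasSum f 1) :
    (∀ k : ℕ, CHSec1 v1 v2 f k k ⊆ SigmaSec1 v1 v2 f k k) ∧
    (∀ k : ℕ, CHSec2 v1 v2 f k k ⊆ SigmaSec2 v1 v2 f k k) ∧
    (∀ k : ℕ, (⋂ n : ℕ, CHSec1 v1 v2 f n k) ⊆ ⋂ n : ℕ, SigmaSec1 v1 v2 f n k) ∧
    (∀ k : ℕ, (⋂ n : ℕ, CHSec2 v1 v2 f n k) ⊆ ⋂ n : ℕ, SigmaSec2 v1 v2 f n k) := by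
  refine ⟨?_, ?_, ?_, ?_⟩
  · intro k a ha
    exact (ch_main v1 v2 f k).1 a ha k
  · intro k b hb
    exact (ch_main v1 v2 f k).2 b hb k
  · intro k a ha
    have ha' : a ∈ CHSec1 v1 v2 f k k := Set.mem_iInter.mp ha k
    exact Set.mem_iInter.mpr fun n => (ch_main v1 v2 f k).1 a ha' n
  · intro k b hb
    have hb' : b ∈ CHSec2 v1 v2 f k k := Set.mem_iInter.mp hb k
    exact Set.mem_iInter.mpr fun n => (ch_main v1 v2 f k).2 b hb' n
end

section
/- In the two-player beauty contest game, for every player i, every k ≥ 1, every belief μ ∈ Δ^{θ_{ik}}, and all actions a_i, a′_i ∈ {0,…,100} with a_i < a′_i, the expected payoffs satisfy E_μ[u_i(a_i, ·)] − E_μ[u_i(a′_i, ·)] ≥ f^k(0) · (a′_i − a_i)/101 > 0; that is, every positive action is strictly worse than every smaller action against any belief in Δ^{θ_{ik}}. -/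
open scoped BigOperators
open Classical

/-- The target `a* = (2/3)·(a₁+a₂)/2` in the beauty contest game. -/
noncomputable def bcStar (a b : Fin 101) : ℝ := (2 / 3) * (((a : ℕ) + (b : ℕ) : ℝ) / 2)

/-- Beauty contest payoff: the player closer to `a*` (weakly) wins 1, else 0. -/
noncomputable def bcPay (a b : Fin 101) : ℝ :=
  if |((a : ℕ) : ℝ) - bcStar a b| ≤ |((b : ℕ) : ℝ) - bcStar a b| then 1 else 0

/-! Against `b`, the action `a` wins exactly when `a ≤ b`, because `(b - s)² - (a - s)² = (b² - a²)/3`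
for the target `s = (a + b)/3`. So lowering one's action from `a'` to `a` never loses a win, and
gains one against every opponent action in `[a, a')`. The level-0 opponent alone, who has weight
`f^k(0)` and is uniform over the 101 actions, plays these with total probability
`f^k(0) · (a' - a)/101`. -/

lemma abs_sub_bcTarget_le_iff {x y : ℝ} (hx : 0 ≤ x) (hy : 0 ≤ y) :
    |x - 2 / 3 * ((x + y) / 2)| ≤ |y - 2 / 3 * ((x + y) / 2)| ↔ x ≤ y := by
  have hsq_diff : (y - 2 / 3 * ((x + y) / 2)) ^ 2 - (x - 2 / 3 * ((x + y) / 2)) ^ 2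
      = (y ^ 2 - x ^ 2) / 3 := by
    ring
  rw [← sq_le_sq, ← sq_le_sq₀ hx hy]
  constructor <;> intro h <;> linarith

lemma bcPay_eq (a b : Fin 101) : bcPay a b = if a ≤ b then 1 else 0 := by
  simp only [bcPay, bcStar, abs_sub_bcTarget_le_iff (Nat.cast_nonneg _) (Nat.cast_nonneg _),
    Nat.cast_le, Fin.val_fin_le]

lemma bcPay_nonneg (a b : Fin 101) : 0 ≤ bcPay a b := by
  rw [bcPay_eq]; split_ifs <;> norm_num

lemma abs_bcPay_le_one (a b : Fin 101) : |bcPay a b| ≤ 1 := by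
  rw [bcPay_eq]; split_ifs <;> norm_num

lemma bcPay_antitone (b : Fin 101) : Antitone (bcPay · b) := by
  intro a a' haa'
  simp only [bcPay_eq]
  split_ifs with ha'b hab <;> norm_num
  exact hab (haa'.trans ha'b)

lemma bcPay_sub_bcPay_of_mem_Ico {a a' b : Fin 101} (hb : b ∈ Finset.Ico a a') :
    bcPay a b - bcPay a' b = 1 := by
  obtain ⟨hab, hba'⟩ := Finset.mem_Ico.mp hb
  simp [bcPay_eq, hab, hba']

lemma fnorm_pos {f : ℕ → ℝ} (hf : ∀ n, 0 < f n) {k : ℕ} (hk : k ≠ 0) (t : ℕ) :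
    0 < fnorm f k t :=
  div_pos (hf t) <|
    Finset.sum_pos (fun i _ => hf i) ⟨0, Finset.mem_range.mpr (Nat.pos_of_ne_zero hk)⟩

lemma memDelta.p_zero_eq {B : Type*} [Fintype B] {f : ℕ → ℝ} {k : ℕ} {μ : Belief B}
    (hμ : memDelta f k μ) (hf : ∀ n, 0 < f n) (hk : k ≠ 0) (b : B) :
    μ.p (0, b) = fnorm f k 0 / Fintype.card B := by
  obtain ⟨-, hK2, hK3⟩ := hμ hk
  have hmarg : μ.marg 0 = fnorm f k 0 := hK3 0 (Nat.pos_of_ne_zero hk)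
  have hpos : 0 < μ.marg 0 := hmarg ▸ fnorm_pos hf hk 0
  have hcond := hK2 hpos b
  rw [div_eq_iff hpos.ne', hmarg] at hcond
  rw [hcond]
  ring

section Belief

variable {B : Type*} (μ : Belief B)

lemma Belief.summable_mul {g : ℕ × B → ℝ} {C : ℝ} (hg : ∀ x, |g x| ≤ C) :
    Summable fun x => μ.p x * g x := by
  refine Summable.of_norm_bounded (μ.hasSum_one.summable.mul_right C) fun x => ?_
  rw [norm_mul, Real.norm_of_nonneg (μ.nonneg x), Real.norm_eq_abs]
  exact mul_le_mul_of_nonneg_left (hg x) (μ.nonneg x)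

lemma Belief.sum_le_tsum_mul {g : ℕ × B → ℝ} {C : ℝ} (hg0 : ∀ x, 0 ≤ g x) (hg : ∀ x, |g x| ≤ C)
    (S : Finset (ℕ × B)) : ∑ x ∈ S, μ.p x * g x ≤ ∑' x, μ.p x * g x :=
  (μ.summable_mul hg).sum_le_tsum S fun x _ => mul_nonneg (μ.nonneg x) (hg0 x)

lemma expPay_sub_expPay {A : Type*} {v : A → B → ℝ} {C : ℝ} (hv : ∀ a b, |v a b| ≤ C)
    {k : ℕ} (hk : k ≠ 0) (a a' : A) :
    expPay v k μ a - expPay v k μ a' = ∑' x, μ.p x * (v a x.2 - v a' x.2) := by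
  simp only [expPay, hk, if_false, mul_sub]
  exact ((μ.summable_mul fun x => hv a x.2).tsum_sub (μ.summable_mul fun x => hv a' x.2)).symm

end Belief

theorem beauty_contest_dominance_general
    (f : ℕ → ℝ) (hf : ∀ n, 0 < f n)
    (k : ℕ) (hk : 1 ≤ k) (μ : Belief (Fin 101)) (hμ : memDelta f k μ)
    (a a' : Fin 101) (haa' : a < a') :
    fnorm f k 0 * ((((a' : ℕ) : ℝ) - ((a : ℕ) : ℝ)) / 101)
        ≤ expPay bcPay k μ a - expPay bcPay k μ a' ∧
    0 < fnorm f k 0 * ((((a' : ℕ) : ℝ) - ((a : ℕ) : ℝ)) / 101) := by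
  have hk0 : k ≠ 0 := Nat.one_le_iff_ne_zero.mp hk
  have hgap : (0 : ℝ) < (a' : ℕ) - (a : ℕ) := sub_pos.mpr (Nat.cast_lt.mpr haa')
  refine ⟨?_, mul_pos (fnorm_pos hf hk0 0) (div_pos hgap (by norm_num))⟩
  have hgain_abs : ∀ x : ℕ × Fin 101, |bcPay a x.2 - bcPay a' x.2| ≤ 1 := fun x => by
    have hle : bcPay a' x.2 ≤ bcPay a x.2 := bcPay_antitone x.2 haa'.le
    rw [abs_of_nonneg (sub_nonneg.mpr hle)]
    linarith [bcPay_nonneg a' x.2, (le_abs_self _).trans (abs_bcPay_le_one a x.2)]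
  have hlevel0 : ∑ x ∈ (Finset.Ico a a').map (Function.Embedding.sectR 0 _),
      μ.p x * (bcPay a x.2 - bcPay a' x.2)
        = fnorm f k 0 * ((((a' : ℕ) : ℝ) - ((a : ℕ) : ℝ)) / 101) := by
    rw [Finset.sum_map]
    simp only [Function.Embedding.sectR_apply]
    rw [Finset.sum_congr rfl fun b hb => by
      rw [bcPay_sub_bcPay_of_mem_Ico hb, hμ.p_zero_eq hf hk0, Fintype.card_fin, mul_one]]
    rw [Finset.sum_const, Fin.card_Ico, nsmul_eq_mul, Nat.cast_sub (Fin.val_fin_le.mpr haa'.le)]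
    push_cast
    ring
  calc _ = _ := hlevel0.symm
    _ ≤ _ := μ.sum_le_tsum_mul (fun x => sub_nonneg.mpr (bcPay_antitone x.2 haa'.le)) hgain_abs _
    _ = _ := (expPay_sub_expPay μ abs_bcPay_le_one hk0 a a').symm

/-- in the beauty contest game, against any belief in Δ^{θ_{ik}} (k ≥ 1),
any larger action does strictly worse, with the stated margin. -/
theorem beauty_contest_dominance
    (f : ℕ → ℝ) (hf : ∀ n, 0 < f n) (hfsum : HasSum f 1)
    (k : ℕ) (hk : 1 ≤ k) (μ : Belief (Fin 101)) (hμ : memDelta f k μ)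
    (a a' : Fin 101) (haa' : a < a') :
    fnorm f k 0 * ((((a' : ℕ) : ℝ) - ((a : ℕ) : ℝ)) / 101)
        ≤ expPay bcPay k μ a - expPay bcPay k μ a' ∧
    0 < fnorm f k 0 * ((((a' : ℕ) : ℝ) - ((a : ℕ) : ℝ)) / 101) :=
  beauty_contest_dominance_general f hf k hk μ hμ a a' haa'
end
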